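/- Let m be an integer with m ≥ 7 or m = 5, let ω = exp(2πi/m), let e^(j) ∈ ℂ^m have k-th entry ω^{jk}, and let v* = i·e^(1) − e^(2) + e^(3) ∈ ℂ^m. Then for every natural number n one has A(M^n v*) ≠ 0 and G(M^n v*) ≠ 0, and for all natural numbers n ≠ n', G(M^n v*) is not a real scalar multiple of G(M^{n'} v*); in particular, no two of the iterated centroids are colinear with their limit point 0, so the colinearity phenomenon fails for m-gons. -/

import Mathlib

open Complex

noncomputable section

/-- `ω = exp(2πi/m)`, a primitive m-th root of unity. -/
def ωc (m : ℕ) : ℂ := Complex.exp (2 * Real.pi * Complex.I / m)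

/-- The midpoint map on m-gons: `(Mv)_k = (v_k + v_{k+1})/2`, indices mod m. -/
def Mg {m : ℕ} [NeZero m] (v : Fin m → ℂ) : Fin m → ℂ := fun k => (v k + v (k + 1)) / 2

/-- Signed area of an m-gon. -/
def Ag {m : ℕ} [NeZero m] (v : Fin m → ℂ) : ℝ :=
  (1 / 2) * ∑ k : Fin m, ((starRingEnd ℂ) (v k) * v (k + 1)).im

/-- The quantity `Z(v) = ∑ (v_k + v_{k+1})·Im(conj(v_k)·v_{k+1})` for an m-gon. -/
def Zg {m : ℕ} [NeZero m] (v : Fin m → ℂ) : ℂ :=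
  ∑ k : Fin m, (v k + v (k + 1)) * (((starRingEnd ℂ) (v k) * v (k + 1)).im : ℂ)

/-- The centroid `G(v) = Z(v)/(6·A(v))` of an m-gon. -/
def Gg {m : ℕ} [NeZero m] (v : Fin m → ℂ) : ℂ := Zg v / (6 * (Ag v : ℂ))

/-- The witness m-gon `v* = i·e^(1) − e^(2) + e^(3)`. -/
def vstar (m : ℕ) : Fin m → ℂ := fun k =>
  Complex.I * ωc m ^ (1 * (k : ℕ)) - ωc m ^ (2 * (k : ℕ)) + ωc m ^ (3 * (k : ℕ))

namespace ColinAux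

/-- the basic m-gon with eigen-coefficients c1 c2 c3 -/
def pg (m : ℕ) (c1 c2 c3 : ℂ) : Fin m → ℂ := fun k =>
  c1 * ωc m ^ (k : ℕ) + c2 * (ωc m ^ 2) ^ (k : ℕ) + c3 * (ωc m ^ 3) ^ (k : ℕ)

def μc (m j : ℕ) : ℂ := (1 + ωc m ^ j) / 2

lemma omega_prim (m : ℕ) [NeZero m] : IsPrimitiveRoot (ωc m) m :=
  Complex.isPrimitiveRoot_exp m (NeZero.ne m)

lemma omega_pow_m (m : ℕ) [NeZero m] : ωc m ^ m = 1 := (omega_prim m).pow_eq_one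

lemma omega_ne_zero (m : ℕ) : ωc m ≠ 0 := Complex.exp_ne_zero _

lemma omega_pow_mod (m : ℕ) [NeZero m] (a : ℕ) : ωc m ^ (a % m) = ωc m ^ a := by
  conv_rhs => rw [← Nat.div_add_mod a m]
  rw [pow_add, pow_mul, omega_pow_m, one_pow, one_mul]

lemma omega_step (m : ℕ) [NeZero m] (hm : 5 ≤ m) (j : ℕ) (k : Fin m) :
    (ωc m ^ j) ^ ((k + 1 : Fin m) : ℕ) = (ωc m ^ j) ^ (k : ℕ) * ωc m ^ j := by
  have hval : ((k + 1 : Fin m) : ℕ) = ((k : ℕ) + 1) % m := by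
    rw [Fin.add_def]
    congr 1
    rw [Fin.val_one', Nat.mod_eq_of_lt (by omega : 1 < m)]
  have hmod : (j * (((k : ℕ) + 1) % m)) % m = (j * ((k : ℕ) + 1)) % m :=
    (Nat.ModEq.mul_left j (Nat.mod_modEq ((k : ℕ) + 1) m))
  rw [hval, ← pow_mul, ← omega_pow_mod m (j * (((k : ℕ) + 1) % m)), hmod,
    omega_pow_mod, mul_add, mul_one, pow_add, pow_mul]

lemma sum_pow_eq_zero {m : ℕ} [NeZero m] {w : ℂ} (hw : w ^ m = 1) (h1 : w ≠ 1) :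
    ∑ k : Fin m, w ^ (k : ℕ) = 0 := by
  rw [Fin.sum_univ_eq_sum_range (fun i => w ^ i), geom_sum_eq h1, hw]
  simp

lemma vstar_eq (m : ℕ) : vstar m = pg m Complex.I (-1) 1 := by
  funext k
  simp only [vstar, pg, pow_mul, one_mul]
  ring

lemma Mg_pg (m : ℕ) [NeZero m] (hm : 5 ≤ m) (c1 c2 c3 : ℂ) :
    Mg (pg m c1 c2 c3) = pg m (c1 * μc m 1) (c2 * μc m 2) (c3 * μc m 3) := by
  funext k
  simp only [Mg, pg, omega_step m hm 2 k, omega_step m hm 3 k, μc]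
  have h1 : ωc m ^ ((k + 1 : Fin m) : ℕ) = ωc m ^ (k : ℕ) * ωc m := by
    have := omega_step m hm 1 k; simpa using this
  rw [h1]
  ring

lemma iterate_pg (m : ℕ) [NeZero m] (hm : 5 ≤ m) (n : ℕ) :
    Mg^[n] (vstar m) = pg m (Complex.I * μc m 1 ^ n) (-(μc m 2 ^ n)) (μc m 3 ^ n) := by
  induction n with
  | zero => simpa using vstar_eq m
  | succ n ih =>
    rw [Function.iterate_succ_apply', ih, Mg_pg m hm]
    rw [show Complex.I * μc m 1 ^ n * μc m 1 = Complex.I * μc m 1 ^ (n + 1) by ring,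
      show -(μc m 2 ^ n) * μc m 2 = -(μc m 2 ^ (n + 1)) by ring,
      show μc m 3 ^ n * μc m 3 = μc m 3 ^ (n + 1) by ring]
def NZm1 (om c1 c2 c3 d1 d2 d3 : ℂ) : ℂ :=
  c1 * d3 * c1 * (1 + om ^ 1) * (om ^ 4 - 1) * om ^ 0

def NZ0 (om c1 c2 c3 d1 d2 d3 : ℂ) : ℂ :=
  c1 * d2 * c1 * (1 + om ^ 1) * (om ^ 3 - 1) * om ^ 1 +
    c1 * d3 * c2 * (1 + om ^ 1) * (om ^ 5 - 1) * om ^ 0 +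
    c2 * d3 * c1 * (1 + om ^ 2) * (om ^ 4 - 1) * om ^ 0

def NZ1 (om c1 c2 c3 d1 d2 d3 : ℂ) : ℂ :=
  c1 * d1 * c1 * (1 + om ^ 1) * (om ^ 2 - 1) * om ^ 2 +
    c1 * d2 * c2 * (1 + om ^ 1) * (om ^ 4 - 1) * om ^ 1 +
    c1 * d3 * c3 * (1 + om ^ 1) * (om ^ 6 - 1) * om ^ 0 +
    c2 * d2 * c1 * (1 + om ^ 2) * (om ^ 3 - 1) * om ^ 1 +
    c2 * d3 * c2 * (1 + om ^ 2) * (om ^ 5 - 1) * om ^ 0 +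
    c3 * d3 * c1 * (1 + om ^ 3) * (om ^ 4 - 1) * om ^ 0

def NZ2 (om c1 c2 c3 d1 d2 d3 : ℂ) : ℂ :=
  c1 * d1 * c2 * (1 + om ^ 1) * (om ^ 3 - 1) * om ^ 2 +
    c1 * d2 * c3 * (1 + om ^ 1) * (om ^ 5 - 1) * om ^ 1 +
    c2 * d1 * c1 * (1 + om ^ 2) * (om ^ 2 - 1) * om ^ 2 +
    c2 * d2 * c2 * (1 + om ^ 2) * (om ^ 4 - 1) * om ^ 1 +
    c2 * d3 * c3 * (1 + om ^ 2) * (om ^ 6 - 1) * om ^ 0 +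
    c3 * d2 * c1 * (1 + om ^ 3) * (om ^ 3 - 1) * om ^ 1 +
    c3 * d3 * c2 * (1 + om ^ 3) * (om ^ 5 - 1) * om ^ 0

def NZ3 (om c1 c2 c3 d1 d2 d3 : ℂ) : ℂ :=
  c1 * d1 * c3 * (1 + om ^ 1) * (om ^ 4 - 1) * om ^ 2 +
    c2 * d1 * c2 * (1 + om ^ 2) * (om ^ 3 - 1) * om ^ 2 +
    c2 * d2 * c3 * (1 + om ^ 2) * (om ^ 5 - 1) * om ^ 1 +
    c3 * d1 * c1 * (1 + om ^ 3) * (om ^ 2 - 1) * om ^ 2 +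
    c3 * d2 * c2 * (1 + om ^ 3) * (om ^ 4 - 1) * om ^ 1 +
    c3 * d3 * c3 * (1 + om ^ 3) * (om ^ 6 - 1) * om ^ 0

def NZ4 (om c1 c2 c3 d1 d2 d3 : ℂ) : ℂ :=
  c2 * d1 * c3 * (1 + om ^ 2) * (om ^ 4 - 1) * om ^ 2 +
    c3 * d1 * c2 * (1 + om ^ 3) * (om ^ 3 - 1) * om ^ 2 +
    c3 * d2 * c3 * (1 + om ^ 3) * (om ^ 5 - 1) * om ^ 1

def NZ5 (om c1 c2 c3 d1 d2 d3 : ℂ) : ℂ :=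
  c3 * d1 * c3 * (1 + om ^ 3) * (om ^ 4 - 1) * om ^ 2

lemma algZ (om z c1 c2 c3 d1 d2 d3 : ℂ) :
    ((c1 * z + c2 * z ^ 2 + c3 * z ^ 3) + (c1 * om * z + c2 * om ^ 2 * z ^ 2 + c3 * om ^ 3 * z ^ 3)) *
      ((d1 * z ^ 2 + d2 * z + d3) * om ^ 3 * (c1 * om * z + c2 * om ^ 2 * z ^ 2 + c3 * om ^ 3 * z ^ 3)
        - (c1 * z + c2 * z ^ 2 + c3 * z ^ 3) * (d1 * om ^ 2 * z ^ 2 + d2 * om * z + d3))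
    = NZm1 om c1 c2 c3 d1 d2 d3 * z ^ 2 + NZ0 om c1 c2 c3 d1 d2 d3 * z ^ 3
      + NZ1 om c1 c2 c3 d1 d2 d3 * z ^ 4 + NZ2 om c1 c2 c3 d1 d2 d3 * z ^ 5
      + NZ3 om c1 c2 c3 d1 d2 d3 * z ^ 6 + NZ4 om c1 c2 c3 d1 d2 d3 * z ^ 7
      + NZ5 om c1 c2 c3 d1 d2 d3 * z ^ 8 := by
  simp only [NZm1, NZ0, NZ1, NZ2, NZ3, NZ4, NZ5]
  ring

lemma combine (V W Q1 Q2 om3 z3 : ℂ) (hz3 : z3 ≠ 0) (hom3 : om3 ≠ 0) :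
    (V + W) * (((Q1 / z3) * W - V * (Q2 / (om3 * z3))) / (2 * Complex.I))
      = (V + W) * (Q1 * om3 * W - V * Q2) / (2 * Complex.I * om3 * z3) := by
  have hI : Complex.I ≠ 0 := Complex.I_ne_zero
  field_simp

lemma split7 (om3 z N1 N2 N3 N4 N5 N6 N7 : ℂ) (hz : z ≠ 0) :
    (N1 * z ^ 2 + N2 * z ^ 3 + N3 * z ^ 4 + N4 * z ^ 5 + N5 * z ^ 6 + N6 * z ^ 7 + N7 * z ^ 8)
        / (2 * Complex.I * om3 * z ^ 3)
      = (N1 * z⁻¹ + N2 + N3 * z + N4 * z ^ 2 + N5 * z ^ 3 + N6 * z ^ 4 + N7 * z ^ 5)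
          * (2 * Complex.I * om3)⁻¹ := by
  calc (N1 * z ^ 2 + N2 * z ^ 3 + N3 * z ^ 4 + N4 * z ^ 5 + N5 * z ^ 6 + N6 * z ^ 7 + N7 * z ^ 8)
        / (2 * Complex.I * om3 * z ^ 3)
      = ((N1 * z ^ 2 + N2 * z ^ 3 + N3 * z ^ 4 + N4 * z ^ 5 + N5 * z ^ 6 + N6 * z ^ 7 + N7 * z ^ 8)
          * (z ^ 3)⁻¹) * (2 * Complex.I * om3)⁻¹ := by
        rw [div_eq_mul_inv, show (2 * Complex.I * om3 * z ^ 3)⁻¹ = (z ^ 3)⁻¹ * (2 * Complex.I * om3)⁻¹ by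
          rw [← mul_inv]; ring_nf]
        ring
    _ = (N1 * z⁻¹ + N2 + N3 * z + N4 * z ^ 2 + N5 * z ^ 3 + N6 * z ^ 4 + N7 * z ^ 5)
          * (2 * Complex.I * om3)⁻¹ := by
        congr 1
        field_simp

noncomputable def erc (t : ℝ) : ℂ := Complex.exp (t * Complex.I)

lemma erc_ne_zero (t : ℝ) : erc t ≠ 0 := Complex.exp_ne_zero _

lemma erc_add (s t : ℝ) : erc (s + t) = erc s * erc t := by
  rw [erc, erc, erc, ← Complex.exp_add]; congr 1; push_cast; ring

lemma erc_neg (t : ℝ) : erc (-t) = (erc t)⁻¹ := by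
  rw [erc, erc, ← Complex.exp_neg]; congr 1; push_cast; ring

lemma erc_nat_mul (n : ℕ) (t : ℝ) : erc (n * t) = erc t ^ n := by
  rw [erc, erc, ← Complex.exp_nat_mul]; congr 1; push_cast; ring

lemma conj_erc (t : ℝ) : (starRingEnd ℂ) (erc t) = (erc t)⁻¹ := by
  rw [erc, ← Complex.exp_conj, ← Complex.exp_neg]; congr 1
  simp [map_mul, Complex.conj_I, Complex.conj_ofReal]

lemma cos_erc (t : ℝ) : (Real.cos t : ℂ) = (erc t + (erc t)⁻¹) / 2 := by
  rw [← erc_neg, erc, erc, Complex.ofReal_cos, Complex.cos]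
  push_cast; ring

lemma sin_erc (t : ℝ) : (Real.sin t : ℂ) = (erc t - (erc t)⁻¹) / (2 * Complex.I) := by
  rw [← erc_neg, erc, erc, Complex.ofReal_sin, Complex.sin, Complex.ofReal_neg,
    show -(t:ℂ) * Complex.I = -((t:ℂ) * Complex.I) by ring]
  have hI : Complex.I ≠ 0 := Complex.I_ne_zero
  field_simp
  linear_combination (Complex.exp (-((t:ℂ) * Complex.I)) - Complex.exp ((t:ℂ) * Complex.I)) * Complex.I_sq

lemma omega_erc (m : ℕ) : ωc m = erc (2 * Real.pi / m) := by
  rw [ωc, erc]; congr 1; push_cast; ring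

lemma conj_omega (m : ℕ) : (starRingEnd ℂ) (ωc m) = (ωc m)⁻¹ := by
  rw [omega_erc]; exact conj_erc _

lemma im_coe (x : ℂ) : (x.im : ℂ) = (x - (starRingEnd ℂ) x) / (2 * Complex.I) := by
  rw [Complex.sub_conj]
  have hI : Complex.I ≠ 0 := Complex.I_ne_zero
  field_simp
  push_cast; ring

lemma conj_form (c1 c2 c3 z : ℂ) (hz : z ≠ 0) (hcz : (starRingEnd ℂ) z = z⁻¹) :
    (starRingEnd ℂ) (c1 * z + c2 * z ^ 2 + c3 * z ^ 3)
      = ((starRingEnd ℂ) c1 * z ^ 2 + (starRingEnd ℂ) c2 * z + (starRingEnd ℂ) c3) / z ^ 3 := by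
  rw [map_add, map_add, map_mul, map_mul, map_mul, map_pow, map_pow, hcz]
  field_simp

lemma conj_form1 (om c1 c2 c3 z : ℂ) (hom : om ≠ 0) (hz : z ≠ 0)
    (hcz : (starRingEnd ℂ) z = z⁻¹) (hcom : (starRingEnd ℂ) om = om⁻¹) :
    (starRingEnd ℂ) (c1 * om * z + c2 * om ^ 2 * z ^ 2 + c3 * om ^ 3 * z ^ 3)
      = ((starRingEnd ℂ) c1 * om ^ 2 * z ^ 2 + (starRingEnd ℂ) c2 * om * z + (starRingEnd ℂ) c3)
        / (om ^ 3 * z ^ 3) := by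
  have h : (starRingEnd ℂ) (om * z) = (om * z)⁻¹ := by rw [map_mul, hcz, hcom, mul_inv]
  rw [show c1 * om * z + c2 * om ^ 2 * z ^ 2 + c3 * om ^ 3 * z ^ 3
      = c1 * (om * z) + c2 * (om * z) ^ 2 + c3 * (om * z) ^ 3 by ring,
    conj_form c1 c2 c3 (om * z) (mul_ne_zero hom hz) h,
    show (om * z) ^ 3 = om ^ 3 * z ^ 3 by ring]
  congr 1
  ring

lemma Z_summand (m : ℕ) [NeZero m] (hm : 5 ≤ m) (c1 c2 c3 : ℂ) (k : Fin m) :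
    (pg m c1 c2 c3 k + pg m c1 c2 c3 (k + 1)) *
        (((starRingEnd ℂ) (pg m c1 c2 c3 k) * pg m c1 c2 c3 (k + 1)).im : ℂ)
      = (NZm1 (ωc m) c1 c2 c3 ((starRingEnd ℂ) c1) ((starRingEnd ℂ) c2) ((starRingEnd ℂ) c3) * ((ωc m)⁻¹) ^ (k : ℕ)
        + NZ0 (ωc m) c1 c2 c3 ((starRingEnd ℂ) c1) ((starRingEnd ℂ) c2) ((starRingEnd ℂ) c3)
        + NZ1 (ωc m) c1 c2 c3 ((starRingEnd ℂ) c1) ((starRingEnd ℂ) c2) ((starRingEnd ℂ) c3) * (ωc m) ^ (k : ℕ)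
        + NZ2 (ωc m) c1 c2 c3 ((starRingEnd ℂ) c1) ((starRingEnd ℂ) c2) ((starRingEnd ℂ) c3) * (ωc m ^ 2) ^ (k : ℕ)
        + NZ3 (ωc m) c1 c2 c3 ((starRingEnd ℂ) c1) ((starRingEnd ℂ) c2) ((starRingEnd ℂ) c3) * (ωc m ^ 3) ^ (k : ℕ)
        + NZ4 (ωc m) c1 c2 c3 ((starRingEnd ℂ) c1) ((starRingEnd ℂ) c2) ((starRingEnd ℂ) c3) * (ωc m ^ 4) ^ (k : ℕ)
        + NZ5 (ωc m) c1 c2 c3 ((starRingEnd ℂ) c1) ((starRingEnd ℂ) c2) ((starRingEnd ℂ) c3) * (ωc m ^ 5) ^ (k : ℕ))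
        * (2 * Complex.I * (ωc m) ^ 3)⁻¹ := by
  have hω0 : ωc m ≠ 0 := omega_ne_zero m
  have hz0 : ωc m ^ (k : ℕ) ≠ 0 := pow_ne_zero _ hω0
  have hcz : (starRingEnd ℂ) (ωc m ^ (k : ℕ)) = (ωc m ^ (k : ℕ))⁻¹ := by
    rw [map_pow, conj_omega, inv_pow]
  have hpk : pg m c1 c2 c3 k
      = c1 * ωc m ^ (k : ℕ) + c2 * (ωc m ^ (k : ℕ)) ^ 2 + c3 * (ωc m ^ (k : ℕ)) ^ 3 := by
    rw [pg, pow_right_comm (ωc m) 2, pow_right_comm (ωc m) 3]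
  have e1 : ωc m ^ ((k + 1 : Fin m) : ℕ) = ωc m ^ (k : ℕ) * ωc m := by
    simpa using omega_step m hm 1 k
  have hpk1 : pg m c1 c2 c3 (k + 1)
      = c1 * ωc m * ωc m ^ (k : ℕ) + c2 * (ωc m) ^ 2 * (ωc m ^ (k : ℕ)) ^ 2
        + c3 * (ωc m) ^ 3 * (ωc m ^ (k : ℕ)) ^ 3 := by
    rw [pg, e1, omega_step m hm 2 k, omega_step m hm 3 k,
      pow_right_comm (ωc m) 2, pow_right_comm (ωc m) 3]
    ring
  rw [im_coe, map_mul, Complex.conj_conj, hpk, hpk1,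
    conj_form c1 c2 c3 _ hz0 hcz, conj_form1 (ωc m) c1 c2 c3 _ hω0 hz0 hcz (conj_omega m),
    combine _ _ _ _ _ _ (pow_ne_zero 3 hz0) (pow_ne_zero 3 hω0),
    algZ, split7 _ _ _ _ _ _ _ _ _ hz0,
    ← inv_pow (ωc m) (k : ℕ),
    pow_right_comm (ωc m) (k : ℕ) 2, pow_right_comm (ωc m) (k : ℕ) 3,
    pow_right_comm (ωc m) (k : ℕ) 4, pow_right_comm (ωc m) (k : ℕ) 5]

lemma Zg_eq (m : ℕ) [NeZero m] (hm : 5 ≤ m) (c1 c2 c3 : ℂ) :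
    Zg (pg m c1 c2 c3)
      = ((m : ℂ) * NZ0 (ωc m) c1 c2 c3 ((starRingEnd ℂ) c1) ((starRingEnd ℂ) c2) ((starRingEnd ℂ) c3)
        + (∑ k : Fin m, (ωc m ^ 5) ^ (k : ℕ))
            * NZ5 (ωc m) c1 c2 c3 ((starRingEnd ℂ) c1) ((starRingEnd ℂ) c2) ((starRingEnd ℂ) c3))
        * (2 * Complex.I * (ωc m) ^ 3)⁻¹ := by
  have hprim := omega_prim m
  have hne1 : ωc m ≠ 1 := hprim.ne_one (by omega)
  have hs1 : ∑ k : Fin m, (ωc m) ^ (k : ℕ) = 0 := sum_pow_eq_zero (omega_pow_m m) hne1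
  have hsinv : ∑ k : Fin m, ((ωc m)⁻¹) ^ (k : ℕ) = 0 := by
    refine sum_pow_eq_zero ?_ ?_
    · rw [inv_pow, omega_pow_m, inv_one]
    · simpa [inv_eq_one] using hne1
  have hspow : ∀ j : ℕ, 0 < j → j < m → ∑ k : Fin m, (ωc m ^ j) ^ (k : ℕ) = 0 := by
    intro j hj hjm
    refine sum_pow_eq_zero ?_ (hprim.pow_ne_one_of_pos_of_lt hj.ne' hjm)
    rw [pow_right_comm, omega_pow_m, one_pow]
  rw [Zg, Finset.sum_congr rfl fun k _ => Z_summand m hm c1 c2 c3 k, ← Finset.sum_mul]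
  congr 1
  rw [Finset.sum_add_distrib, Finset.sum_add_distrib, Finset.sum_add_distrib,
    Finset.sum_add_distrib, Finset.sum_add_distrib, Finset.sum_add_distrib]
  rw [← Finset.mul_sum, ← Finset.mul_sum, ← Finset.mul_sum, ← Finset.mul_sum,
    ← Finset.mul_sum, ← Finset.mul_sum]
  rw [hsinv, hs1, hspow 2 (by omega) (by omega), hspow 3 (by omega) (by omega),
    hspow 4 (by omega) (by omega), Finset.sum_const, Finset.card_univ, Fintype.card_fin,
    nsmul_eq_mul]
  ring

def NAm2 (om c1 c2 c3 d1 d2 d3 : ℂ) : ℂ := d3 * c1 * om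
def NAm1 (om c1 c2 c3 d1 d2 d3 : ℂ) : ℂ := d2 * c1 * om + d3 * c2 * om ^ 2
def NA0 (om c1 c2 c3 d1 d2 d3 : ℂ) : ℂ := d1 * c1 * om + d2 * c2 * om ^ 2 + d3 * c3 * om ^ 3
def NA1 (om c1 c2 c3 d1 d2 d3 : ℂ) : ℂ := d1 * c2 * om ^ 2 + d2 * c3 * om ^ 3
def NA2 (om c1 c2 c3 d1 d2 d3 : ℂ) : ℂ := d1 * c3 * om ^ 3

lemma algA (om z c1 c2 c3 d1 d2 d3 : ℂ) :
    (d1 * z ^ 2 + d2 * z + d3) * (c1 * om * z + c2 * om ^ 2 * z ^ 2 + c3 * om ^ 3 * z ^ 3)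
      = NAm2 om c1 c2 c3 d1 d2 d3 * z + NAm1 om c1 c2 c3 d1 d2 d3 * z ^ 2
        + NA0 om c1 c2 c3 d1 d2 d3 * z ^ 3 + NA1 om c1 c2 c3 d1 d2 d3 * z ^ 4
        + NA2 om c1 c2 c3 d1 d2 d3 * z ^ 5 := by
  simp only [NAm2, NAm1, NA0, NA1, NA2]
  ring

lemma splitA (z N1 N2 N3 N4 N5 : ℂ) (hz : z ≠ 0) :
    (N1 * z + N2 * z ^ 2 + N3 * z ^ 3 + N4 * z ^ 4 + N5 * z ^ 5) / z ^ 3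
      = N1 * (z ^ 2)⁻¹ + N2 * z⁻¹ + N3 + N4 * z + N5 * z ^ 2 := by
  field_simp

lemma A_summand (m : ℕ) [NeZero m] (hm : 5 ≤ m) (c1 c2 c3 : ℂ) (k : Fin m) :
    (starRingEnd ℂ) (pg m c1 c2 c3 k) * pg m c1 c2 c3 (k + 1)
      = NAm2 (ωc m) c1 c2 c3 ((starRingEnd ℂ) c1) ((starRingEnd ℂ) c2) ((starRingEnd ℂ) c3) * ((ωc m ^ 2)⁻¹) ^ (k : ℕ)
        + NAm1 (ωc m) c1 c2 c3 ((starRingEnd ℂ) c1) ((starRingEnd ℂ) c2) ((starRingEnd ℂ) c3) * ((ωc m)⁻¹) ^ (k : ℕ)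
        + NA0 (ωc m) c1 c2 c3 ((starRingEnd ℂ) c1) ((starRingEnd ℂ) c2) ((starRingEnd ℂ) c3)
        + NA1 (ωc m) c1 c2 c3 ((starRingEnd ℂ) c1) ((starRingEnd ℂ) c2) ((starRingEnd ℂ) c3) * (ωc m) ^ (k : ℕ)
        + NA2 (ωc m) c1 c2 c3 ((starRingEnd ℂ) c1) ((starRingEnd ℂ) c2) ((starRingEnd ℂ) c3) * (ωc m ^ 2) ^ (k : ℕ) := by
  have hω0 : ωc m ≠ 0 := omega_ne_zero m
  have hz0 : ωc m ^ (k : ℕ) ≠ 0 := pow_ne_zero _ hω0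
  have hcz : (starRingEnd ℂ) (ωc m ^ (k : ℕ)) = (ωc m ^ (k : ℕ))⁻¹ := by
    rw [map_pow, conj_omega, inv_pow]
  have hpk : pg m c1 c2 c3 k
      = c1 * ωc m ^ (k : ℕ) + c2 * (ωc m ^ (k : ℕ)) ^ 2 + c3 * (ωc m ^ (k : ℕ)) ^ 3 := by
    rw [pg, pow_right_comm (ωc m) 2, pow_right_comm (ωc m) 3]
  have e1 : ωc m ^ ((k + 1 : Fin m) : ℕ) = ωc m ^ (k : ℕ) * ωc m := by
    simpa using omega_step m hm 1 k
  have hpk1 : pg m c1 c2 c3 (k + 1)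
      = c1 * ωc m * ωc m ^ (k : ℕ) + c2 * (ωc m) ^ 2 * (ωc m ^ (k : ℕ)) ^ 2
        + c3 * (ωc m) ^ 3 * (ωc m ^ (k : ℕ)) ^ 3 := by
    rw [pg, e1, omega_step m hm 2 k, omega_step m hm 3 k,
      pow_right_comm (ωc m) 2, pow_right_comm (ωc m) 3]
    ring
  rw [hpk, hpk1, conj_form c1 c2 c3 _ hz0 hcz, div_mul_eq_mul_div, algA,
    splitA _ _ _ _ _ _ hz0, pow_right_comm (ωc m) (k : ℕ) 2,
    ← inv_pow (ωc m ^ 2) (k : ℕ), ← inv_pow (ωc m) (k : ℕ)]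

lemma Ag_eq (m : ℕ) [NeZero m] (hm : 5 ≤ m) (c1 c2 c3 : ℂ) :
    Ag (pg m c1 c2 c3)
      = 1 / 2 * ((m : ℂ)
          * NA0 (ωc m) c1 c2 c3 ((starRingEnd ℂ) c1) ((starRingEnd ℂ) c2) ((starRingEnd ℂ) c3)).im := by
  have hprim := omega_prim m
  have hne1 : ωc m ≠ 1 := hprim.ne_one (by omega)
  have hs1 : ∑ k : Fin m, (ωc m) ^ (k : ℕ) = 0 := sum_pow_eq_zero (omega_pow_m m) hne1
  have hsinv : ∑ k : Fin m, ((ωc m)⁻¹) ^ (k : ℕ) = 0 := by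
    refine sum_pow_eq_zero ?_ ?_
    · rw [inv_pow, omega_pow_m, inv_one]
    · simpa [inv_eq_one] using hne1
  have hs2 : ∑ k : Fin m, (ωc m ^ 2) ^ (k : ℕ) = 0 := by
    refine sum_pow_eq_zero ?_ (hprim.pow_ne_one_of_pos_of_lt (by omega) (by omega))
    rw [pow_right_comm, omega_pow_m, one_pow]
  have hs2i : ∑ k : Fin m, ((ωc m ^ 2)⁻¹) ^ (k : ℕ) = 0 := by
    refine sum_pow_eq_zero ?_ ?_
    · rw [inv_pow, pow_right_comm, omega_pow_m, one_pow, inv_one]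
    · simpa [inv_eq_one] using hprim.pow_ne_one_of_pos_of_lt (by omega : (2:ℕ) ≠ 0) (by omega)
  have : ∑ k : Fin m, (starRingEnd ℂ) (pg m c1 c2 c3 k) * pg m c1 c2 c3 (k + 1)
      = (m : ℂ) * NA0 (ωc m) c1 c2 c3 ((starRingEnd ℂ) c1) ((starRingEnd ℂ) c2) ((starRingEnd ℂ) c3) := by
    rw [Finset.sum_congr rfl fun k _ => A_summand m hm c1 c2 c3 k]
    rw [Finset.sum_add_distrib, Finset.sum_add_distrib, Finset.sum_add_distrib,
      Finset.sum_add_distrib, ← Finset.mul_sum, ← Finset.mul_sum, ← Finset.mul_sum,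
      ← Finset.mul_sum, hsinv, hs1, hs2, hs2i, Finset.sum_const, Finset.card_univ,
      Fintype.card_fin, nsmul_eq_mul]
    ring
  rw [Ag, ← Complex.im_sum, this]

lemma NA0_abstract (x y a1 a2 a3 : ℂ) (hy : y ≠ 0) :
    NA0 (x ^ 2) (Complex.I * a1 * y) (-(a2 * y ^ 2)) (a3 * y ^ 3)
        (-(Complex.I * a1 * y⁻¹)) (-(a2 * (y ^ 2)⁻¹)) (a3 * (y ^ 3)⁻¹)
      = a1 ^ 2 * x ^ 2 + a2 ^ 2 * x ^ 4 + a3 ^ 2 * x ^ 6 := by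
  rw [NA0,
    show -(Complex.I * a1 * y⁻¹) * (Complex.I * a1 * y) * (x ^ 2)
        = -((Complex.I * Complex.I) * (a1 ^ 2 * x ^ 2 * (y * y⁻¹))) by ring,
    show -(a2 * (y ^ 2)⁻¹) * -(a2 * y ^ 2) * (x ^ 2) ^ 2
        = a2 ^ 2 * x ^ 4 * (y ^ 2 * (y ^ 2)⁻¹) by ring,
    show a3 * (y ^ 3)⁻¹ * (a3 * y ^ 3) * (x ^ 2) ^ 3
        = a3 ^ 2 * x ^ 6 * (y ^ 3 * (y ^ 3)⁻¹) by ring,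
    Complex.I_mul_I, mul_inv_cancel₀ hy, mul_inv_cancel₀ (pow_ne_zero 2 hy),
    mul_inv_cancel₀ (pow_ne_zero 3 hy)]
  ring

lemma NZ0_abstract (x y a1 a2 a3 p1 p2 s3 s4 s5 : ℂ) (hx : x ≠ 0) (hy : y ≠ 0)
    (hp1 : 2 * p1 = x + x⁻¹) (hp2 : 2 * p2 = x ^ 2 + (x ^ 2)⁻¹)
    (hs3 : 2 * Complex.I * s3 = x ^ 3 - (x ^ 3)⁻¹)
    (hs4 : 2 * Complex.I * s4 = x ^ 4 - (x ^ 4)⁻¹)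
    (hs5 : 2 * Complex.I * s5 = x ^ 5 - (x ^ 5)⁻¹) :
    NZ0 (x ^ 2) (Complex.I * a1 * y) (-(a2 * y ^ 2)) (a3 * y ^ 3)
        (-(Complex.I * a1 * y⁻¹)) (-(a2 * (y ^ 2)⁻¹)) (a3 * (y ^ 3)⁻¹)
      = 2 * Complex.I * (x ^ 2) ^ 3
          * (2 * (p1 * s3) * (a1 ^ 2 * a2)
             - Complex.I * (2 * (p1 * s5 + p2 * s4) * (a1 * a2 * a3))) := by
  have e1 : (Complex.I * a1 * y) * (-(a2 * (y ^ 2)⁻¹)) * (Complex.I * a1 * y) = a1 ^ 2 * a2 := by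
    rw [show (Complex.I * a1 * y) * (-(a2 * (y ^ 2)⁻¹)) * (Complex.I * a1 * y)
        = -((Complex.I * Complex.I) * (a1 ^ 2 * a2 * (y ^ 2 * (y ^ 2)⁻¹))) by ring,
      Complex.I_mul_I, mul_inv_cancel₀ (pow_ne_zero 2 hy)]
    ring
  have e2 : (Complex.I * a1 * y) * (a3 * (y ^ 3)⁻¹) * (-(a2 * y ^ 2))
      = -(Complex.I * (a1 * a2 * a3)) := by
    rw [show (Complex.I * a1 * y) * (a3 * (y ^ 3)⁻¹) * (-(a2 * y ^ 2))
        = -(Complex.I * (a1 * a2 * a3) * (y ^ 3 * (y ^ 3)⁻¹)) by ring,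
      mul_inv_cancel₀ (pow_ne_zero 3 hy)]
    ring
  have e3 : (-(a2 * y ^ 2)) * (a3 * (y ^ 3)⁻¹) * (Complex.I * a1 * y)
      = -(Complex.I * (a1 * a2 * a3)) := by
    rw [show (-(a2 * y ^ 2)) * (a3 * (y ^ 3)⁻¹) * (Complex.I * a1 * y)
        = -(Complex.I * (a1 * a2 * a3) * (y ^ 3 * (y ^ 3)⁻¹)) by ring,
      mul_inv_cancel₀ (pow_ne_zero 3 hy)]
    ring
  have g1 : (1 + x ^ 2) * ((x ^ 2) ^ 3 - 1) * x ^ 2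
      = (2 * p1) * (2 * Complex.I * s3) * (x ^ 2) ^ 3 := by
    rw [hp1, hs3]
    field_simp
    ring
  have g2 : (1 + x ^ 2) * ((x ^ 2) ^ 5 - 1)
      = (2 * p1) * (2 * Complex.I * s5) * (x ^ 2) ^ 3 := by
    rw [hp1, hs5]
    field_simp
    ring
  have g3 : (1 + (x ^ 2) ^ 2) * ((x ^ 2) ^ 4 - 1)
      = (2 * p2) * (2 * Complex.I * s4) * (x ^ 2) ^ 3 := by
    rw [hp2, hs4]
    field_simp
    ring
  calc NZ0 (x ^ 2) (Complex.I * a1 * y) (-(a2 * y ^ 2)) (a3 * y ^ 3)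
        (-(Complex.I * a1 * y⁻¹)) (-(a2 * (y ^ 2)⁻¹)) (a3 * (y ^ 3)⁻¹)
      = ((Complex.I * a1 * y) * (-(a2 * (y ^ 2)⁻¹)) * (Complex.I * a1 * y))
          * ((1 + x ^ 2) * ((x ^ 2) ^ 3 - 1) * x ^ 2)
        + ((Complex.I * a1 * y) * (a3 * (y ^ 3)⁻¹) * (-(a2 * y ^ 2)))
          * ((1 + x ^ 2) * ((x ^ 2) ^ 5 - 1))
        + ((-(a2 * y ^ 2)) * (a3 * (y ^ 3)⁻¹) * (Complex.I * a1 * y))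
          * ((1 + (x ^ 2) ^ 2) * ((x ^ 2) ^ 4 - 1)) := by
        rw [NZ0]; ring
    _ = (a1 ^ 2 * a2) * ((2 * p1) * (2 * Complex.I * s3) * (x ^ 2) ^ 3)
        + (-(Complex.I * (a1 * a2 * a3))) * ((2 * p1) * (2 * Complex.I * s5) * (x ^ 2) ^ 3)
        + (-(Complex.I * (a1 * a2 * a3))) * ((2 * p2) * (2 * Complex.I * s4) * (x ^ 2) ^ 3) := by
        rw [e1, e2, e3, g1, g2, g3]
    _ = 2 * Complex.I * (x ^ 2) ^ 3
          * (2 * (p1 * s3) * (a1 ^ 2 * a2)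
             - Complex.I * (2 * (p1 * s5 + p2 * s4) * (a1 * a2 * a3))) := by ring

lemma NZ5_abstract (x y a1 a3 p3 s4 e : ℂ) (hx : x ≠ 0) (hy : y ≠ 0)
    (hx5 : x ^ 5 = -1) (hy5 : y ^ 5 = e)
    (hp3 : 2 * p3 = x ^ 3 + (x ^ 3)⁻¹) (hs4 : 2 * Complex.I * s4 = x ^ 4 - (x ^ 4)⁻¹)
    (c2' d2' : ℂ) :
    NZ5 (x ^ 2) (Complex.I * a1 * y) c2' (a3 * y ^ 3)
        (-(Complex.I * a1 * y⁻¹)) d2' (a3 * (y ^ 3)⁻¹)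
      = 2 * Complex.I * (x ^ 2) ^ 3 * (Complex.I * (2 * (p3 * s4) * (a1 * a3 ^ 2 * e))) := by
  have e5 : (a3 * y ^ 3) * (-(Complex.I * a1 * y⁻¹)) * (a3 * y ^ 3)
      = -(Complex.I * (a1 * a3 ^ 2 * e)) := by
    rw [show (a3 * y ^ 3) * (-(Complex.I * a1 * y⁻¹)) * (a3 * y ^ 3)
        = -(Complex.I * (a1 * a3 ^ 2 * y ^ 5) * (y * y⁻¹)) by ring,
      mul_inv_cancel₀ hy, hy5]
    ring
  have h6 : x ^ 6 = -x := by linear_combination x * hx5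
  have h8 : x ^ 8 = -x ^ 3 := by linear_combination x ^ 3 * hx5
  have hinv3 : (x ^ 3)⁻¹ = -x ^ 2 := by
    refine inv_eq_of_mul_eq_one_right ?_
    rw [show x ^ 3 * -x ^ 2 = -(x ^ 5) by ring, hx5]; ring
  have hinv4 : (x ^ 4)⁻¹ = -x := by
    refine inv_eq_of_mul_eq_one_right ?_
    rw [show x ^ 4 * -x = -(x ^ 5) by ring, hx5]; ring
  have g5 : (1 + x ^ 6) * (x ^ 8 - 1) * x ^ 4
      = -((2 * p3) * (2 * Complex.I * s4)) * x ^ 6 := by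
    rw [hp3, hs4, hinv3, hinv4, h8, h6]
    ring
  calc NZ5 (x ^ 2) (Complex.I * a1 * y) c2' (a3 * y ^ 3)
        (-(Complex.I * a1 * y⁻¹)) d2' (a3 * (y ^ 3)⁻¹)
      = ((a3 * y ^ 3) * (-(Complex.I * a1 * y⁻¹)) * (a3 * y ^ 3))
          * ((1 + x ^ 6) * (x ^ 8 - 1) * x ^ 4) := by
        rw [NZ5]; ring
    _ = (-(Complex.I * (a1 * a3 ^ 2 * e))) * (-((2 * p3) * (2 * Complex.I * s4)) * x ^ 6) := by
        rw [e5, g5]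
    _ = 2 * Complex.I * (x ^ 2) ^ 3 * (Complex.I * (2 * (p3 * s4) * (a1 * a3 ^ 2 * e))) := by
        ring

lemma mu_erc (m : ℕ) (j : ℕ) :
    μc m j = ((Real.cos (j * (Real.pi / m)) : ℝ) : ℂ) * erc (Real.pi / m) ^ j := by
  have hx : erc (2 * Real.pi / m) = erc (Real.pi / m) ^ 2 := by
    rw [show 2 * Real.pi / m = Real.pi / m + Real.pi / m by ring, erc_add]; ring
  have hj : erc ((j : ℝ) * (Real.pi / m)) = erc (Real.pi / m) ^ j := erc_nat_mul j _
  rw [μc, omega_erc, hx, ← pow_mul, mul_comm 2 j, pow_mul, cos_erc, hj]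
  have h0 : erc (Real.pi / m) ^ j ≠ 0 := pow_ne_zero _ (erc_ne_zero _)
  field_simp
  ring

lemma A_formula (m : ℕ) [NeZero m] (hm : 5 ≤ m) (n : ℕ) :
    Ag (Mg^[n] (vstar m))
      = (m : ℝ) / 2 * (((Real.cos (Real.pi / m)) ^ n) ^ 2 * Real.sin (2 * (Real.pi / m))
          + ((Real.cos (2 * (Real.pi / m))) ^ n) ^ 2 * Real.sin (4 * (Real.pi / m))
          + ((Real.cos (3 * (Real.pi / m))) ^ n) ^ 2 * Real.sin (6 * (Real.pi / m))) := by
  have m1 := mu_erc m 1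
  have m2 := mu_erc m 2
  have m3 := mu_erc m 3
  rw [show ((1 : ℕ) : ℝ) = 1 by norm_num, one_mul, pow_one] at m1
  rw [show ((2 : ℕ) : ℝ) = 2 by norm_num] at m2
  rw [show ((3 : ℕ) : ℝ) = 3 by norm_num] at m3
  set x : ℂ := erc (Real.pi / m) with hxdef
  set y : ℂ := x ^ n with hydef
  have hy : y ≠ 0 := pow_ne_zero _ (erc_ne_zero _)
  set a1 : ℂ := ((Real.cos (Real.pi / m) : ℝ) : ℂ) ^ n with ha1
  set a2 : ℂ := ((Real.cos (2 * (Real.pi / m)) : ℝ) : ℂ) ^ n with ha2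
  set a3 : ℂ := ((Real.cos (3 * (Real.pi / m)) : ℝ) : ℂ) ^ n with ha3
  have hC1 : Complex.I * μc m 1 ^ n = Complex.I * a1 * y := by
    rw [m1, mul_pow, ha1]; ring
  have hC2 : -(μc m 2 ^ n) = -(a2 * y ^ 2) := by
    rw [m2, mul_pow, pow_right_comm, ha2, hydef]
  have hC3 : μc m 3 ^ n = a3 * y ^ 3 := by
    rw [m3, mul_pow, pow_right_comm, ha3, hydef]
  have hcy : (starRingEnd ℂ) y = y⁻¹ := by
    rw [hydef, hxdef, map_pow, conj_erc, inv_pow]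
  have hca : ∀ t : ℝ, (starRingEnd ℂ) (((t : ℝ) : ℂ) ^ n) = ((t : ℝ) : ℂ) ^ n := by
    intro t; rw [map_pow, Complex.conj_ofReal]
  have hD1 : (starRingEnd ℂ) (Complex.I * a1 * y) = -(Complex.I * a1 * y⁻¹) := by
    rw [map_mul, map_mul, Complex.conj_I, ha1, hca, hcy]; ring
  have hD2 : (starRingEnd ℂ) (-(a2 * y ^ 2)) = -(a2 * (y ^ 2)⁻¹) := by
    rw [map_neg, map_mul, ha2, hca, map_pow, hcy, inv_pow]
  have hD3 : (starRingEnd ℂ) (a3 * y ^ 3) = a3 * (y ^ 3)⁻¹ := by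
    rw [map_mul, ha3, hca, map_pow, hcy, inv_pow]
  have homega : ωc m = x ^ 2 := by
    rw [omega_erc, show 2 * Real.pi / m = Real.pi / m + Real.pi / m by ring, erc_add, hxdef]; ring
  have hx4 : erc (4 * (Real.pi / m)) = x ^ 4 := by
    rw [hxdef, ← erc_nat_mul]; norm_num
  have hx6 : erc (6 * (Real.pi / m)) = x ^ 6 := by
    rw [hxdef, ← erc_nat_mul]; norm_num
  have hx2 : erc (2 * (Real.pi / m)) = x ^ 2 := by
    rw [hxdef, ← erc_nat_mul]; norm_num
  rw [iterate_pg m hm n, Ag_eq m hm, hC1, hC2, hC3, hD1, hD2, hD3, homega,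
    NA0_abstract x y a1 a2 a3 hy]
  have him : ((m : ℂ) * (a1 ^ 2 * x ^ 2 + a2 ^ 2 * x ^ 4 + a3 ^ 2 * x ^ 6)).im
      = (m : ℝ) * (((Real.cos (Real.pi / m)) ^ n) ^ 2 * Real.sin (2 * (Real.pi / m))
          + ((Real.cos (2 * (Real.pi / m))) ^ n) ^ 2 * Real.sin (4 * (Real.pi / m))
          + ((Real.cos (3 * (Real.pi / m))) ^ n) ^ 2 * Real.sin (6 * (Real.pi / m))) := by
    rw [show (m : ℂ) * (a1 ^ 2 * x ^ 2 + a2 ^ 2 * x ^ 4 + a3 ^ 2 * x ^ 6)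
        = (((m : ℝ) * ((Real.cos (Real.pi / m) ^ n) ^ 2) : ℝ) : ℂ) * erc (2 * (Real.pi / m))
          + (((m : ℝ) * ((Real.cos (2 * (Real.pi / m)) ^ n) ^ 2) : ℝ) : ℂ) * erc (4 * (Real.pi / m))
          + (((m : ℝ) * ((Real.cos (3 * (Real.pi / m)) ^ n) ^ 2) : ℝ) : ℂ) * erc (6 * (Real.pi / m)) by
      rw [hx2, hx4, hx6, ha1, ha2, ha3]; push_cast; ring]
    simp only [Complex.add_im, Complex.mul_im, Complex.ofReal_re, Complex.ofReal_im, erc,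
      Complex.exp_ofReal_mul_I_re, Complex.exp_ofReal_mul_I_im]
    ring
  rw [him]
  ring

lemma Z7_formula (m : ℕ) [NeZero m] (hm : 7 ≤ m) (n : ℕ) :
    Zg (Mg^[n] (vstar m))
      = 2 * (m : ℂ)
        * (((Real.cos (Real.pi / m) * Real.sin (3 * (Real.pi / m))
              * (Real.cos (Real.pi / m) ^ 2 * Real.cos (2 * (Real.pi / m))) ^ n : ℝ) : ℂ)
          - Complex.I * (((Real.cos (Real.pi / m) * Real.sin (5 * (Real.pi / m))
              + Real.cos (2 * (Real.pi / m)) * Real.sin (4 * (Real.pi / m)))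
              * (Real.cos (Real.pi / m) * Real.cos (2 * (Real.pi / m))
                * Real.cos (3 * (Real.pi / m))) ^ n : ℝ) : ℂ)) := by
  have hm5 : 5 ≤ m := by omega
  have m1 := mu_erc m 1
  have m2 := mu_erc m 2
  have m3 := mu_erc m 3
  rw [show ((1 : ℕ) : ℝ) = 1 by norm_num, one_mul, pow_one] at m1
  rw [show ((2 : ℕ) : ℝ) = 2 by norm_num] at m2
  rw [show ((3 : ℕ) : ℝ) = 3 by norm_num] at m3
  set x : ℂ := erc (Real.pi / m) with hxdef
  have hx : x ≠ 0 := erc_ne_zero _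
  set y : ℂ := x ^ n with hydef
  have hy : y ≠ 0 := pow_ne_zero _ (erc_ne_zero _)
  set a1 : ℂ := ((Real.cos (Real.pi / m) : ℝ) : ℂ) ^ n with ha1
  set a2 : ℂ := ((Real.cos (2 * (Real.pi / m)) : ℝ) : ℂ) ^ n with ha2
  set a3 : ℂ := ((Real.cos (3 * (Real.pi / m)) : ℝ) : ℂ) ^ n with ha3
  have hC1 : Complex.I * μc m 1 ^ n = Complex.I * a1 * y := by
    rw [m1, mul_pow, ha1]; ring
  have hC2 : -(μc m 2 ^ n) = -(a2 * y ^ 2) := by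
    rw [m2, mul_pow, pow_right_comm, ha2, hydef]
  have hC3 : μc m 3 ^ n = a3 * y ^ 3 := by
    rw [m3, mul_pow, pow_right_comm, ha3, hydef]
  have hcy : (starRingEnd ℂ) y = y⁻¹ := by
    rw [hydef, hxdef, map_pow, conj_erc, inv_pow]
  have hca : ∀ t : ℝ, (starRingEnd ℂ) (((t : ℝ) : ℂ) ^ n) = ((t : ℝ) : ℂ) ^ n := by
    intro t; rw [map_pow, Complex.conj_ofReal]
  have hD1 : (starRingEnd ℂ) (Complex.I * a1 * y) = -(Complex.I * a1 * y⁻¹) := by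
    rw [map_mul, map_mul, Complex.conj_I, ha1, hca, hcy]; ring
  have hD2 : (starRingEnd ℂ) (-(a2 * y ^ 2)) = -(a2 * (y ^ 2)⁻¹) := by
    rw [map_neg, map_mul, ha2, hca, map_pow, hcy, inv_pow]
  have hD3 : (starRingEnd ℂ) (a3 * y ^ 3) = a3 * (y ^ 3)⁻¹ := by
    rw [map_mul, ha3, hca, map_pow, hcy, inv_pow]
  have homega : ωc m = x ^ 2 := by
    rw [omega_erc, show 2 * Real.pi / m = Real.pi / m + Real.pi / m by ring, erc_add, hxdef]; ring
  have hx2 : erc (2 * (Real.pi / m)) = x ^ 2 := by rw [hxdef, ← erc_nat_mul]; norm_num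
  have hx3 : erc (3 * (Real.pi / m)) = x ^ 3 := by rw [hxdef, ← erc_nat_mul]; norm_num
  have hx4 : erc (4 * (Real.pi / m)) = x ^ 4 := by rw [hxdef, ← erc_nat_mul]; norm_num
  have hx5 : erc (5 * (Real.pi / m)) = x ^ 5 := by rw [hxdef, ← erc_nat_mul]; norm_num
  have hp1 : 2 * ((Real.cos (Real.pi / m) : ℝ) : ℂ) = x + x⁻¹ := by
    rw [cos_erc, hxdef]; ring
  have hp2 : 2 * ((Real.cos (2 * (Real.pi / m)) : ℝ) : ℂ) = x ^ 2 + (x ^ 2)⁻¹ := by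
    rw [cos_erc, hx2]; ring
  have hIne : (2 : ℂ) * Complex.I ≠ 0 := by
    simp [Complex.I_ne_zero]
  have hs3 : 2 * Complex.I * ((Real.sin (3 * (Real.pi / m)) : ℝ) : ℂ) = x ^ 3 - (x ^ 3)⁻¹ := by
    rw [sin_erc, hx3, mul_div_cancel₀ _ hIne]
  have hs4 : 2 * Complex.I * ((Real.sin (4 * (Real.pi / m)) : ℝ) : ℂ) = x ^ 4 - (x ^ 4)⁻¹ := by
    rw [sin_erc, hx4, mul_div_cancel₀ _ hIne]
  have hs5 : 2 * Complex.I * ((Real.sin (5 * (Real.pi / m)) : ℝ) : ℂ) = x ^ 5 - (x ^ 5)⁻¹ := by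
    rw [sin_erc, hx5, mul_div_cancel₀ _ hIne]
  have hprim := omega_prim m
  have hS5 : ∑ k : Fin m, (ωc m ^ 5) ^ (k : ℕ) = 0 := by
    refine sum_pow_eq_zero ?_ (hprim.pow_ne_one_of_pos_of_lt (by omega) (by omega))
    rw [pow_right_comm, omega_pow_m, one_pow]
  have hb : 2 * Complex.I * (ωc m) ^ 3 ≠ 0 :=
    mul_ne_zero (mul_ne_zero two_ne_zero Complex.I_ne_zero) (pow_ne_zero _ (omega_ne_zero m))
  rw [iterate_pg m hm5 n, Zg_eq m hm5, hS5, zero_mul, add_zero, hC1, hC2, hC3, hD1, hD2, hD3]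
  rw [show NZ0 (ωc m) (Complex.I * a1 * y) (-(a2 * y ^ 2)) (a3 * y ^ 3) (-(Complex.I * a1 * y⁻¹))
        (-(a2 * (y ^ 2)⁻¹)) (a3 * (y ^ 3)⁻¹)
      = NZ0 (x ^ 2) (Complex.I * a1 * y) (-(a2 * y ^ 2)) (a3 * y ^ 3) (-(Complex.I * a1 * y⁻¹))
        (-(a2 * (y ^ 2)⁻¹)) (a3 * (y ^ 3)⁻¹) by rw [homega]]
  rw [NZ0_abstract x y a1 a2 a3 _ _ _ _ _ hx hy hp1 hp2 hs3 hs4 hs5, homega]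
  have hb2 : 2 * Complex.I * (x ^ 2) ^ 3 ≠ 0 := by rw [← homega]; exact hb
  rw [mul_inv_eq_iff_eq_mul₀ hb2]
  rw [ha1, ha2, ha3]
  push_cast
  ring

lemma Z5_formula (m : ℕ) [NeZero m] (hm : m = 5) (n : ℕ) :
    Zg (Mg^[n] (vstar m))
      = 2 * (m : ℂ)
        * (((Real.cos (Real.pi / m) * Real.sin (3 * (Real.pi / m))
              * (Real.cos (Real.pi / m) ^ 2 * Real.cos (2 * (Real.pi / m))) ^ n : ℝ) : ℂ)
          - Complex.I * (((2 * Real.cos (2 * (Real.pi / m)) * Real.sin (4 * (Real.pi / m)))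
              * (Real.cos (Real.pi / m) * Real.cos (2 * (Real.pi / m))
                * Real.cos (3 * (Real.pi / m))) ^ n : ℝ) : ℂ)) := by
  have hm5 : 5 ≤ m := by omega
  have hmr : (m : ℝ) = 5 := by rw [hm]; norm_num
  have m1 := mu_erc m 1
  have m2 := mu_erc m 2
  have m3 := mu_erc m 3
  rw [show ((1 : ℕ) : ℝ) = 1 by norm_num, one_mul, pow_one] at m1
  rw [show ((2 : ℕ) : ℝ) = 2 by norm_num] at m2
  rw [show ((3 : ℕ) : ℝ) = 3 by norm_num] at m3
  set x : ℂ := erc (Real.pi / m) with hxdef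
  have hx : x ≠ 0 := erc_ne_zero _
  set y : ℂ := x ^ n with hydef
  have hy : y ≠ 0 := pow_ne_zero _ (erc_ne_zero _)
  set a1 : ℂ := ((Real.cos (Real.pi / m) : ℝ) : ℂ) ^ n with ha1
  set a2 : ℂ := ((Real.cos (2 * (Real.pi / m)) : ℝ) : ℂ) ^ n with ha2
  set a3 : ℂ := ((Real.cos (3 * (Real.pi / m)) : ℝ) : ℂ) ^ n with ha3
  have hC1 : Complex.I * μc m 1 ^ n = Complex.I * a1 * y := by
    rw [m1, mul_pow, ha1]; ring
  have hC2 : -(μc m 2 ^ n) = -(a2 * y ^ 2) := by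
    rw [m2, mul_pow, pow_right_comm, ha2, hydef]
  have hC3 : μc m 3 ^ n = a3 * y ^ 3 := by
    rw [m3, mul_pow, pow_right_comm, ha3, hydef]
  have hcy : (starRingEnd ℂ) y = y⁻¹ := by
    rw [hydef, hxdef, map_pow, conj_erc, inv_pow]
  have hca : ∀ t : ℝ, (starRingEnd ℂ) (((t : ℝ) : ℂ) ^ n) = ((t : ℝ) : ℂ) ^ n := by
    intro t; rw [map_pow, Complex.conj_ofReal]
  have hD1 : (starRingEnd ℂ) (Complex.I * a1 * y) = -(Complex.I * a1 * y⁻¹) := by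
    rw [map_mul, map_mul, Complex.conj_I, ha1, hca, hcy]; ring
  have hD2 : (starRingEnd ℂ) (-(a2 * y ^ 2)) = -(a2 * (y ^ 2)⁻¹) := by
    rw [map_neg, map_mul, ha2, hca, map_pow, hcy, inv_pow]
  have hD3 : (starRingEnd ℂ) (a3 * y ^ 3) = a3 * (y ^ 3)⁻¹ := by
    rw [map_mul, ha3, hca, map_pow, hcy, inv_pow]
  have homega : ωc m = x ^ 2 := by
    rw [omega_erc, show 2 * Real.pi / m = Real.pi / m + Real.pi / m by ring, erc_add, hxdef]; ring
  have hx2 : erc (2 * (Real.pi / m)) = x ^ 2 := by rw [hxdef, ← erc_nat_mul]; norm_num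
  have hx3 : erc (3 * (Real.pi / m)) = x ^ 3 := by rw [hxdef, ← erc_nat_mul]; norm_num
  have hx4 : erc (4 * (Real.pi / m)) = x ^ 4 := by rw [hxdef, ← erc_nat_mul]; norm_num
  have hx5 : erc (5 * (Real.pi / m)) = x ^ 5 := by rw [hxdef, ← erc_nat_mul]; norm_num
  have h5pi : 5 * (Real.pi / m) = Real.pi := by rw [hmr]; ring
  have hx5c : x ^ 5 = -1 := by
    rw [← hx5, h5pi, erc, Complex.exp_pi_mul_I]
  have hy5 : y ^ 5 = ((((-1 : ℝ)) ^ n : ℝ) : ℂ) := by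
    rw [hydef, pow_right_comm, hx5c]; push_cast; ring
  have hp1 : 2 * ((Real.cos (Real.pi / m) : ℝ) : ℂ) = x + x⁻¹ := by
    rw [cos_erc, hxdef]; ring
  have hp2 : 2 * ((Real.cos (2 * (Real.pi / m)) : ℝ) : ℂ) = x ^ 2 + (x ^ 2)⁻¹ := by
    rw [cos_erc, hx2]; ring
  have hp3 : 2 * ((Real.cos (3 * (Real.pi / m)) : ℝ) : ℂ) = x ^ 3 + (x ^ 3)⁻¹ := by
    rw [cos_erc, hx3]; ring
  have hIne : (2 : ℂ) * Complex.I ≠ 0 := by simp [Complex.I_ne_zero]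
  have hs3 : 2 * Complex.I * ((Real.sin (3 * (Real.pi / m)) : ℝ) : ℂ) = x ^ 3 - (x ^ 3)⁻¹ := by
    rw [sin_erc, hx3, mul_div_cancel₀ _ hIne]
  have hs4 : 2 * Complex.I * ((Real.sin (4 * (Real.pi / m)) : ℝ) : ℂ) = x ^ 4 - (x ^ 4)⁻¹ := by
    rw [sin_erc, hx4, mul_div_cancel₀ _ hIne]
  have hs5 : 2 * Complex.I * ((Real.sin (5 * (Real.pi / m)) : ℝ) : ℂ) = x ^ 5 - (x ^ 5)⁻¹ := by
    rw [sin_erc, hx5, mul_div_cancel₀ _ hIne]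
  have hS5 : ∑ k : Fin m, (ωc m ^ 5) ^ (k : ℕ) = (m : ℂ) := by
    rw [show (5 : ℕ) = m from hm.symm, omega_pow_m]
    simp
  have hb : 2 * Complex.I * (ωc m) ^ 3 ≠ 0 :=
    mul_ne_zero (mul_ne_zero two_ne_zero Complex.I_ne_zero) (pow_ne_zero _ (omega_ne_zero m))
  -- real trig facts for m = 5
  have hs50 : Real.sin (5 * (Real.pi / m)) = 0 := by rw [h5pi, Real.sin_pi]
  have hc32 : Real.cos (3 * (Real.pi / m)) = -Real.cos (2 * (Real.pi / m)) := by
    rw [show 3 * (Real.pi / m) = Real.pi - 2 * (Real.pi / m) by rw [hmr]; ring, Real.cos_pi_sub]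
  have hc23 : Real.cos (2 * (Real.pi / m)) = -Real.cos (3 * (Real.pi / m)) := by
    rw [hc32]; ring
  have Rfact : Real.cos (Real.pi / m) ^ n * (Real.cos (3 * (Real.pi / m)) ^ n) ^ 2 * (-1 : ℝ) ^ n
      = (Real.cos (Real.pi / m) * Real.cos (2 * (Real.pi / m)) * Real.cos (3 * (Real.pi / m))) ^ n := by
    rw [show Real.cos (Real.pi / m) * Real.cos (2 * (Real.pi / m)) * Real.cos (3 * (Real.pi / m))
        = -(Real.cos (Real.pi / m) * Real.cos (3 * (Real.pi / m)) ^ 2) by rw [hc23]; ring,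
      neg_pow]
    ring
  have hUc : a1 ^ 2 * a2
      = (((Real.cos (Real.pi / m) ^ 2 * Real.cos (2 * (Real.pi / m))) ^ n : ℝ) : ℂ) := by
    rw [ha1, ha2]; push_cast; ring
  have hWc : a1 * a2 * a3
      = (((Real.cos (Real.pi / m) * Real.cos (2 * (Real.pi / m))
          * Real.cos (3 * (Real.pi / m))) ^ n : ℝ) : ℂ) := by
    rw [ha1, ha2, ha3]; push_cast; ring
  have hFc : a1 * a3 ^ 2 * ((((-1 : ℝ)) ^ n : ℝ) : ℂ)
      = (((Real.cos (Real.pi / m) * Real.cos (2 * (Real.pi / m))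
          * Real.cos (3 * (Real.pi / m))) ^ n : ℝ) : ℂ) := by
    rw [ha1, ha3, ← Rfact]; push_cast; ring
  rw [iterate_pg m hm5 n, Zg_eq m hm5, hS5, hC1, hC2, hC3, hD1, hD2, hD3]
  rw [show NZ0 (ωc m) (Complex.I * a1 * y) (-(a2 * y ^ 2)) (a3 * y ^ 3) (-(Complex.I * a1 * y⁻¹))
        (-(a2 * (y ^ 2)⁻¹)) (a3 * (y ^ 3)⁻¹)
      = NZ0 (x ^ 2) (Complex.I * a1 * y) (-(a2 * y ^ 2)) (a3 * y ^ 3) (-(Complex.I * a1 * y⁻¹))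
        (-(a2 * (y ^ 2)⁻¹)) (a3 * (y ^ 3)⁻¹) by rw [homega],
    show NZ5 (ωc m) (Complex.I * a1 * y) (-(a2 * y ^ 2)) (a3 * y ^ 3) (-(Complex.I * a1 * y⁻¹))
        (-(a2 * (y ^ 2)⁻¹)) (a3 * (y ^ 3)⁻¹)
      = NZ5 (x ^ 2) (Complex.I * a1 * y) (-(a2 * y ^ 2)) (a3 * y ^ 3) (-(Complex.I * a1 * y⁻¹))
        (-(a2 * (y ^ 2)⁻¹)) (a3 * (y ^ 3)⁻¹) by rw [homega]]
  rw [NZ0_abstract x y a1 a2 a3 _ _ _ _ _ hx hy hp1 hp2 hs3 hs4 hs5,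
    NZ5_abstract x y a1 a3 _ _ ((((-1 : ℝ)) ^ n : ℝ) : ℂ) hx hy hx5c hy5 hp3 hs4 _ _, homega]
  have hb2 : 2 * Complex.I * (x ^ 2) ^ 3 ≠ 0 := by rw [← homega]; exact hb
  rw [mul_inv_eq_iff_eq_mul₀ hb2, hUc, hWc, hFc, hs50, hc32]
  push_cast
  ring

lemma angle_lt_pi (m : ℕ) (hm : 0 < m) (j : ℝ) (hj : j < m) : j * (Real.pi / m) < Real.pi := by
  have hmpos : (0 : ℝ) < m := by exact_mod_cast hm
  calc j * (Real.pi / m) = Real.pi * (j / m) := by ring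
    _ < Real.pi * 1 := by
        refine mul_lt_mul_of_pos_left ?_ Real.pi_pos
        rw [div_lt_one hmpos]; exact hj
    _ = Real.pi := by ring

lemma angle_lt_half_pi (m : ℕ) (hm : 0 < m) (j : ℝ) (hj : 2 * j < m) :
    j * (Real.pi / m) < Real.pi / 2 := by
  have hmpos : (0 : ℝ) < m := by exact_mod_cast hm
  have h : j / m < 1 / 2 := by
    rw [div_lt_div_iff₀ hmpos (by norm_num : (0:ℝ) < 2)]
    nlinarith
  calc j * (Real.pi / m) = Real.pi * (j / m) := by ring
    _ < Real.pi * (1 / 2) := mul_lt_mul_of_pos_left h Real.pi_pos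
    _ = Real.pi / 2 := by ring

lemma angle_pos (m : ℕ) (hm : 0 < m) (j : ℝ) (hj : 0 < j) : 0 < j * (Real.pi / m) := by
  have hmpos : (0 : ℝ) < m := by exact_mod_cast hm
  positivity

lemma cos_angle_pos (m : ℕ) (hm : 0 < m) (j : ℝ) (hj : 0 ≤ j) (hj2 : 2 * j < m) :
    0 < Real.cos (j * (Real.pi / m)) := by
  have hmpos : (0 : ℝ) < m := by exact_mod_cast hm
  refine Real.cos_pos_of_mem_Ioo ⟨?_, angle_lt_half_pi m hm j hj2⟩
  have : 0 ≤ j * (Real.pi / m) := by positivity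
  nlinarith [Real.pi_pos]

lemma sin_angle_pos (m : ℕ) (hm : 0 < m) (j : ℝ) (hj : 0 < j) (hj2 : j < m) :
    0 < Real.sin (j * (Real.pi / m)) :=
  Real.sin_pos_of_pos_of_lt_pi (angle_pos m hm j hj) (angle_lt_pi m hm j hj2)

set_option maxHeartbeats 800000 in
lemma package (m : ℕ) [NeZero m] (hm : 7 ≤ m ∨ m = 5) :
    ∃ a b u w : ℝ, 0 < a ∧ 0 < b ∧ 0 < u ∧ w ≠ 0 ∧ |w| < u ∧
      (∀ n : ℕ, 0 < Ag (Mg^[n] (vstar m))) ∧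
      (∀ n : ℕ, Zg (Mg^[n] (vstar m))
          = 2 * (m : ℂ) * (((a * u ^ n : ℝ) : ℂ) - Complex.I * ((b * w ^ n : ℝ) : ℂ))) := by
  have hm0 : 0 < m := by rcases hm with h | h <;> omega
  have hmpos : (0 : ℝ) < m := by exact_mod_cast hm0
  have hc1 : 0 < Real.cos (Real.pi / m) := by
    have := cos_angle_pos m hm0 1 (by norm_num) (by rcases hm with h | h <;> [exact_mod_cast (by omega : 2 < m); (rw [h]; norm_num)])
    simpa using this
  have hc2 : 0 < Real.cos (2 * (Real.pi / m)) := by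
    refine cos_angle_pos m hm0 2 (by norm_num) ?_
    rcases hm with h | h
    · exact_mod_cast (by omega : 4 < m)
    · rw [h]; norm_num
  have hs2 : 0 < Real.sin (2 * (Real.pi / m)) := by
    refine sin_angle_pos m hm0 2 (by norm_num) ?_
    rcases hm with h | h
    · exact_mod_cast (by omega : 2 < m)
    · rw [h]; norm_num
  have hs3 : 0 < Real.sin (3 * (Real.pi / m)) := by
    refine sin_angle_pos m hm0 3 (by norm_num) ?_
    rcases hm with h | h
    · exact_mod_cast (by omega : 3 < m)
    · rw [h]; norm_num
  have hs4 : 0 < Real.sin (4 * (Real.pi / m)) := by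
    refine sin_angle_pos m hm0 4 (by norm_num) ?_
    rcases hm with h | h
    · exact_mod_cast (by omega : 4 < m)
    · rw [h]; norm_num
  have hφ0 : (0:ℝ) ≤ Real.pi / m := le_of_lt (by positivity)
  rcases hm with hm7 | hm5
  · -- m ≥ 7
    have hm7r : (7 : ℝ) ≤ m := by exact_mod_cast hm7
    have hc3 : 0 < Real.cos (3 * (Real.pi / m)) :=
      cos_angle_pos m hm0 3 (by norm_num) (by exact_mod_cast (by omega : 6 < m))
    have hs5 : 0 < Real.sin (5 * (Real.pi / m)) :=
      sin_angle_pos m hm0 5 (by norm_num) (by exact_mod_cast (by omega : 5 < m))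
    have hs6 : 0 < Real.sin (6 * (Real.pi / m)) :=
      sin_angle_pos m hm0 6 (by norm_num) (by exact_mod_cast (by omega : 6 < m))
    have hmono : Real.cos (3 * (Real.pi / m)) < Real.cos (Real.pi / m) := by
      have h1 : Real.cos (3 * (Real.pi / m)) < Real.cos (1 * (Real.pi / m)) := by
        refine Real.cos_lt_cos_of_nonneg_of_le_pi (by positivity) ?_ ?_
        · exact le_of_lt (angle_lt_pi m hm0 3 (by exact_mod_cast (by omega : 3 < m)))
        · have hφpos : 0 < Real.pi / (m:ℝ) := by positivity
          linarith
      simpa using h1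
    refine ⟨Real.cos (Real.pi / m) * Real.sin (3 * (Real.pi / m)),
      Real.cos (Real.pi / m) * Real.sin (5 * (Real.pi / m))
        + Real.cos (2 * (Real.pi / m)) * Real.sin (4 * (Real.pi / m)),
      Real.cos (Real.pi / m) ^ 2 * Real.cos (2 * (Real.pi / m)),
      Real.cos (Real.pi / m) * Real.cos (2 * (Real.pi / m)) * Real.cos (3 * (Real.pi / m)),
      mul_pos hc1 hs3, by nlinarith [mul_pos hc1 hs5, mul_pos hc2 hs4], by positivity, by positivity, ?_, ?_, ?_⟩
    · rw [abs_of_pos (by positivity)]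
      nlinarith [mul_lt_mul_of_pos_left hmono (mul_pos hc1 hc2)]
    · intro n
      rw [A_formula m (by omega) n]
      have t1 : 0 < (Real.cos (Real.pi / m) ^ n) ^ 2 * Real.sin (2 * (Real.pi / m)) := by positivity
      have t2 : 0 ≤ (Real.cos (2 * (Real.pi / m)) ^ n) ^ 2 * Real.sin (4 * (Real.pi / m)) := by positivity
      have t3 : 0 ≤ (Real.cos (3 * (Real.pi / m)) ^ n) ^ 2 * Real.sin (6 * (Real.pi / m)) := by positivity
      have : (0:ℝ) < (m : ℝ) / 2 := by positivity
      nlinarith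
    · intro n
      exact Z7_formula m hm7 n
  · -- m = 5
    have hmr : (m : ℝ) = 5 := by rw [hm5]; norm_num
    have hc32 : Real.cos (3 * (Real.pi / m)) = -Real.cos (2 * (Real.pi / m)) := by
      rw [show 3 * (Real.pi / m) = Real.pi - 2 * (Real.pi / m) by rw [hmr]; ring, Real.cos_pi_sub]
    have hmono : Real.cos (2 * (Real.pi / m)) < Real.cos (Real.pi / m) := by
      have h1 : Real.cos (2 * (Real.pi / m)) < Real.cos (1 * (Real.pi / m)) := by
        refine Real.cos_lt_cos_of_nonneg_of_le_pi (by positivity) ?_ ?_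
        · exact le_of_lt (angle_lt_pi m hm0 2 (by rw [hmr]; norm_num))
        · have hφpos : 0 < Real.pi / (m:ℝ) := by positivity
          linarith
      simpa using h1
    refine ⟨Real.cos (Real.pi / m) * Real.sin (3 * (Real.pi / m)),
      2 * Real.cos (2 * (Real.pi / m)) * Real.sin (4 * (Real.pi / m)),
      Real.cos (Real.pi / m) ^ 2 * Real.cos (2 * (Real.pi / m)),
      Real.cos (Real.pi / m) * Real.cos (2 * (Real.pi / m)) * Real.cos (3 * (Real.pi / m)),
      mul_pos hc1 hs3, by nlinarith [mul_pos hc2 hs4], by positivity, ?_, ?_, ?_, ?_⟩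
    · rw [hc32]
      have hpos : 0 < Real.cos (Real.pi / m) * Real.cos (2 * (Real.pi / m)) * Real.cos (2 * (Real.pi / m)) := by positivity
      exact ne_of_lt (by nlinarith)
    · rw [hc32, show Real.cos (Real.pi / m) * Real.cos (2 * (Real.pi / m)) * -Real.cos (2 * (Real.pi / m))
        = -(Real.cos (Real.pi / m) * Real.cos (2 * (Real.pi / m)) ^ 2) by ring,
        abs_neg, abs_of_pos (by positivity)]
      nlinarith [mul_lt_mul_of_pos_left hmono (mul_pos hc1 hc2)]
    · intro n
      rw [A_formula m (by omega) n]
      have hs64 : Real.sin (6 * (Real.pi / m)) = -Real.sin (Real.pi / m) := by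
        rw [show 6 * (Real.pi / m) = Real.pi + Real.pi / m by rw [hmr]; ring, Real.sin_add]
        simp
      have hs4' : Real.sin (4 * (Real.pi / m)) = Real.sin (Real.pi / m) := by
        rw [show 4 * (Real.pi / m) = Real.pi - Real.pi / m by rw [hmr]; ring, Real.sin_pi_sub]
      have hsq : (Real.cos (3 * (Real.pi / m)) ^ n) ^ 2 = (Real.cos (2 * (Real.pi / m)) ^ n) ^ 2 := by
        rw [hc32, pow_right_comm, neg_sq, pow_right_comm]
      rw [hs64, hs4', hsq]
      have t1 : 0 < (Real.cos (Real.pi / m) ^ n) ^ 2 * Real.sin (2 * (Real.pi / m)) := by positivity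
      have : (0:ℝ) < (m : ℝ) / 2 := by positivity
      nlinarith
    · intro n
      exact Z5_formula m hm5 n

lemma pow_cross_ne (u v : ℝ) (hu : 0 < u) (hv : 0 < v) (hvu : v < u) {n n' : ℕ}
    (hne : n ≠ n') : u ^ n * v ^ n' ≠ v ^ n * u ^ n' := by
  intro heq
  rcases hne.lt_or_gt with h | h
  · obtain ⟨d, hd, rfl⟩ : ∃ d, 0 < d ∧ n' = n + d := ⟨n' - n, by omega, by omega⟩
    have h1 : v ^ d = u ^ d := by
      apply mul_left_cancel₀ (show u ^ n * v ^ n ≠ 0 by positivity)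
      rw [pow_add, pow_add] at heq
      linear_combination heq
    have h2 : v ^ d < u ^ d := pow_lt_pow_left₀ hvu hv.le (by omega)
    linarith
  · obtain ⟨d, hd, rfl⟩ : ∃ d, 0 < d ∧ n = n' + d := ⟨n - n', by omega, by omega⟩
    have h1 : u ^ d = v ^ d := by
      apply mul_left_cancel₀ (show u ^ n' * v ^ n' ≠ 0 by positivity)
      rw [pow_add, pow_add] at heq
      linear_combination heq
    have h2 : v ^ d < u ^ d := pow_lt_pow_left₀ hvu hv.le (by omega)
    linarith

lemma sub_I_re (P Q : ℝ) : (((P : ℂ) - Complex.I * (Q : ℂ))).re = P := by simp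

lemma sub_I_inj {P Q P' Q' : ℝ} (h : ((P : ℂ) - Complex.I * (Q : ℂ)) = (P' : ℂ) - Complex.I * (Q' : ℂ)) :
    P = P' ∧ Q = Q' := by
  have hre := congrArg Complex.re h
  have him := congrArg Complex.im h
  simp [Complex.sub_re, Complex.sub_im, Complex.mul_re, Complex.mul_im] at hre him
  exact ⟨hre, by linarith⟩

end ColinAux

theorem colinearity_fails (m : ℕ) [NeZero m] (hm : 7 ≤ m ∨ m = 5) :
    (∀ n : ℕ, Ag (Mg^[n] (vstar m)) ≠ 0 ∧ Gg (Mg^[n] (vstar m)) ≠ 0) ∧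
    (∀ n n' : ℕ, n ≠ n' →
      ¬ ∃ t : ℝ, Gg (Mg^[n] (vstar m)) = t • Gg (Mg^[n'] (vstar m))) := by
  obtain ⟨a, b, u, w, ha, hb, hu, hw0, hwu, hA, hZ⟩ := ColinAux.package m hm
  have hm0 : 0 < m := by rcases hm with h | h <;> omega
  have hmpos : (0 : ℝ) < m := by exact_mod_cast hm0
  have hZre : ∀ n : ℕ, (Zg (Mg^[n] (vstar m))).re = 2 * m * (a * u ^ n) := by
    intro n
    rw [hZ n, show 2 * (m : ℂ) * (((a * u ^ n : ℝ) : ℂ) - Complex.I * ((b * w ^ n : ℝ) : ℂ))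
      = ((2 * m * (a * u ^ n) : ℝ) : ℂ) - Complex.I * ((2 * m * (b * w ^ n) : ℝ) : ℂ) by push_cast; ring,
      ColinAux.sub_I_re]
  have hZne : ∀ n : ℕ, Zg (Mg^[n] (vstar m)) ≠ 0 := by
    intro n hzero
    have h1 := hZre n
    rw [hzero, Complex.zero_re] at h1
    have h2 : 0 < 2 * (m:ℝ) * (a * u ^ n) := by positivity
    linarith
  have h6A : ∀ n : ℕ, (6 : ℂ) * ((Ag (Mg^[n] (vstar m)) : ℝ) : ℂ) ≠ 0 := by
    intro n
    exact mul_ne_zero (by norm_num) (Complex.ofReal_ne_zero.mpr (hA n).ne')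
  constructor
  · intro n
    exact ⟨(hA n).ne', div_ne_zero (hZne n) (h6A n)⟩
  · rintro n n' hne ⟨t, ht⟩
    rw [Gg, Gg, Complex.real_smul, ← mul_div_assoc] at ht
    have h1 := (div_eq_div_iff (h6A n) (h6A n')).mp ht
    set An : ℝ := Ag (Mg^[n] (vstar m)) with hAn
    set An' : ℝ := Ag (Mg^[n'] (vstar m)) with hAn'
    have e1 : Zg (Mg^[n] (vstar m)) * (6 * ((An' : ℝ) : ℂ))
        = ((12 * m * (a * u ^ n) * An' : ℝ) : ℂ) - Complex.I * ((12 * m * (b * w ^ n) * An' : ℝ) : ℂ) := by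
      rw [hZ n]; push_cast; ring
    have e2 : (t : ℂ) * Zg (Mg^[n'] (vstar m)) * (6 * ((An : ℝ) : ℂ))
        = ((12 * m * t * (a * u ^ n') * An : ℝ) : ℂ) - Complex.I * ((12 * m * t * (b * w ^ n') * An : ℝ) : ℂ) := by
      rw [hZ n']; push_cast; ring
    rw [e1, e2] at h1
    obtain ⟨hP, hQ⟩ := ColinAux.sub_I_inj h1
    have hPc : u ^ n * An' = t * (u ^ n' * An) := by
      apply mul_left_cancel₀ (show 12 * (m:ℝ) * a ≠ 0 by positivity)
      linear_combination hP
    have hQc : w ^ n * An' = t * (w ^ n' * An) := by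
      apply mul_left_cancel₀ (show 12 * (m:ℝ) * b ≠ 0 by positivity)
      linear_combination hQ
    have hckey : u ^ n * w ^ n' = w ^ n * u ^ n' := by
      apply mul_left_cancel₀ (show An * An' ≠ 0 from mul_ne_zero (hA n).ne' (hA n').ne')
      linear_combination (w ^ n' * An) * hPc - (u ^ n' * An) * hQc
    have habs : u ^ n * |w| ^ n' = |w| ^ n * u ^ n' := by
      have h : |u ^ n * w ^ n'| = |w ^ n * u ^ n'| := by rw [hckey]
      rwa [abs_mul, abs_mul, _root_.abs_pow, _root_.abs_pow, _root_.abs_pow, _root_.abs_pow, abs_of_pos hu] at h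
    exact ColinAux.pow_cross_ne u |w| hu (abs_pos.mpr hw0) hwu hne habs
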